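/- arXiv:0802.1453 — 4 statements merged into one kernel-verified Lean document; each statement's English description precedes it below -/
import Mathlib

section
/- If n ≥ 1 and the number 4n² + 1 is coprime to 4k² + 1 for every k with 1 ≤ k < n, then 4n² + 1 is prime. -/
/-! Suppose `N = 4n² + 1` is composite and let `p` be its least prime factor, so `p² ≤ N`;
as `N` is odd this forces `p < 2n`. Reducing `n` to its least absolute residue modulo `p` gives
`0 < k ≤ p / 2 < n` with `k² ≡ n² (mod p)`, hence `p ∣ gcd(N, 4k² + 1)`. -/

theorem ZMod.exists_natCast_sq_eq {p : ℕ} [NeZero p] {a : ZMod p} (ha : a ≠ 0) :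
    ∃ k : ℕ, 0 < k ∧ k ≤ p / 2 ∧ (k : ZMod p) ^ 2 = a ^ 2 := by
  refine ⟨a.valMinAbs.natAbs, ?_, a.natAbs_valMinAbs_le, ?_⟩
  · simpa [Int.natAbs_pos, ZMod.valMinAbs_eq_zero] using ha
  · rw [← Int.cast_natCast, ← Int.cast_pow, Int.natAbs_sq, Int.cast_pow, ZMod.coe_valMinAbs]

theorem exists_le_half_dvd_four_mul_sq_add_one {p n : ℕ} (hp : p ≠ 1)
    (hdvd : p ∣ 4 * n ^ 2 + 1) : ∃ k : ℕ, 0 < k ∧ k ≤ p / 2 ∧ p ∣ 4 * k ^ 2 + 1 := by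
  have : NeZero p := ⟨by rintro rfl; simp at hdvd⟩
  have hn : (n : ZMod p) ≠ 0 := by
    rw [Ne, ZMod.natCast_eq_zero_iff]
    intro hpn
    have hpsq : p ∣ 4 * n ^ 2 := (dvd_pow hpn two_ne_zero).mul_left 4
    exact hp (Nat.dvd_one.mp ((Nat.dvd_add_right hpsq).mp hdvd))
  obtain ⟨k, hk0, hkp, hk⟩ := ZMod.exists_natCast_sq_eq hn
  refine ⟨k, hk0, hkp, ?_⟩
  rw [← ZMod.natCast_eq_zero_iff] at hdvd ⊢
  push_cast at hdvd ⊢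
  rwa [hk]

theorem minFac_four_mul_sq_add_one_div_two_lt {n : ℕ} (hn : 1 ≤ n)
    (hN : ¬ (4 * n ^ 2 + 1).Prime) : (4 * n ^ 2 + 1).minFac / 2 < n := by
  set p := (4 * n ^ 2 + 1).minFac
  have hsq : p ^ 2 ≤ 4 * n ^ 2 + 1 := Nat.minFac_sq_le_self (by positivity) hN
  have hp : p ≤ 2 * n := by nlinarith
  have hodd : Odd p := Odd.of_dvd_nat ⟨2 * n ^ 2, by ring⟩ (Nat.minFac_dvd _)
  obtain ⟨m, hm⟩ := hodd
  omega

theorem stmt_2 (n : ℕ) (hn : 1 ≤ n)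
    (h : ∀ k : ℕ, 1 ≤ k → k < n → Nat.gcd (4 * n ^ 2 + 1) (4 * k ^ 2 + 1) = 1) :
    Nat.Prime (4 * n ^ 2 + 1) := by
  by_contra hN
  have hp : (4 * n ^ 2 + 1).minFac.Prime := Nat.minFac_prime (by simpa using Nat.one_le_iff_ne_zero.mp hn)
  obtain ⟨k, hk0, hkp, hk⟩ :=
    exists_le_half_dvd_four_mul_sq_add_one hp.ne_one (Nat.minFac_dvd _)
  have hkn : k < n := hkp.trans_lt (minFac_four_mul_sq_add_one_div_two_lt hn hN)
  have hgcd := Nat.dvd_gcd (Nat.minFac_dvd _) hk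
  rw [h k hk0 hkn] at hgcd
  exact hp.ne_one (Nat.dvd_one.mp hgcd)
end

section
/- Let p be a prime with p ≡ 1 (mod 4), let g be a primitive root modulo p, and let t be the least positive residue of g^((p-1)/4) modulo p. Then setting r = t/2 if t is even and r = (p - t)/2 if t is odd, we have p divides 4r² + 1. -/
/-! A generator `g` of `(ZMod p)ˣ` is a primitive `(p - 1)`-th root of unity, so
`t = g ^ ((p - 1) / 4)` is a primitive fourth root of unity and `t ^ 2 = -1`. Since `p` is odd,
`2 * r` is `t` or `p - t`, so `(2 * r) ^ 2 ≡ t ^ 2 ≡ -1 (mod p)`. -/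

theorem IsPrimitiveRoot.sq_eq_neg_one_of_four {R : Type*} [CommRing R] [NoZeroDivisors R] {ζ : R}
    (h : IsPrimitiveRoot ζ 4) : ζ ^ 2 = -1 :=
  (h.pow (by norm_num) (by norm_num : 4 = 2 * 2)).eq_neg_one_of_two_right

theorem ZMod.isPrimitiveRoot_of_forall_mem_zpowers {p : ℕ} [Fact p.Prime] {g : (ZMod p)ˣ}
    (hg : ∀ x : (ZMod p)ˣ, x ∈ Subgroup.zpowers g) : IsPrimitiveRoot (g : ZMod p) (p - 1) := by
  rw [IsPrimitiveRoot.coe_units_iff, IsPrimitiveRoot.iff_orderOf,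
    orderOf_eq_card_of_forall_mem_zpowers hg, Nat.card_eq_fintype_card, ZMod.card_units]

theorem ZMod.dvd_four_mul_sq_add_one {p m : ℕ} (h : ((2 * m : ℕ) : ZMod p) ^ 2 = -1) :
    p ∣ 4 * m ^ 2 + 1 := by
  rw [← ZMod.natCast_eq_zero_iff]
  push_cast at h ⊢
  linear_combination h

theorem stmt_7_general (p : ℕ) [Fact p.Prime] (hp : p % 4 = 1)
    (g : (ZMod p)ˣ) (hg : ∀ x : (ZMod p)ˣ, x ∈ Subgroup.zpowers g)
    (t : ℕ) (htp : t < p)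
    (ht : (t : ZMod p) = ((g ^ ((p - 1) / 4) : (ZMod p)ˣ) : ZMod p))
    (r : ℕ) (hr : r = if t % 2 = 0 then t / 2 else (p - t) / 2) :
    p ∣ 4 * r ^ 2 + 1 := by
  have ht_sq : (t : ZMod p) ^ 2 = -1 := by
    have hg_prim := ZMod.isPrimitiveRoot_of_forall_mem_zpowers hg
    rw [ht, Units.val_pow_eq_pow_val]
    exact (hg_prim.pow (Nat.sub_pos_of_lt (Fact.out : p.Prime).one_lt)
      (by omega : p - 1 = (p - 1) / 4 * 4)).sq_eq_neg_one_of_four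
  apply ZMod.dvd_four_mul_sq_add_one
  rcases Nat.mod_two_eq_zero_or_one t with ht_even | ht_odd
  · have h2r : 2 * r = t := by rw [hr, if_pos ht_even]; omega
    rwa [h2r]
  · have h2r : 2 * r = p - t := by rw [hr, if_neg (by omega)]; omega
    rw [h2r, Nat.cast_sub htp.le, ZMod.natCast_self, zero_sub, neg_sq, ht_sq]

theorem stmt_7 (p : ℕ) [Fact p.Prime] (hp : p % 4 = 1)
    (g : (ZMod p)ˣ) (hg : ∀ x : (ZMod p)ˣ, x ∈ Subgroup.zpowers g)
    (t : ℕ) (ht0 : 0 < t) (htp : t < p)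
    (ht : (t : ZMod p) = ((g ^ ((p - 1) / 4) : (ZMod p)ˣ) : ZMod p))
    (r : ℕ) (hr : r = if t % 2 = 0 then t / 2 else (p - t) / 2) :
    p ∣ 4 * r ^ 2 + 1 :=
  stmt_7_general p hp g hg t htp ht r hr
end

section
/- Let m > 1 be an odd integer for which 4z² ≡ -1 (mod m) is solvable, let r(m) be the least positive solution, and define x(m) = (4r(m)² + 1)/m. Then x(m) ≤ m - 2. -/
/-!
The map z ↦ z mod m and the reflection z ↦ m - z both preserve the solutions of
4z² ≡ -1 (mod m), so the least positive solution r satisfies r < m and r ≤ m - r; as m is odd,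
2r < m. Hence m·x = 4r² + 1 < (2r + 1)² ≤ m², so x < m, and x is odd like m·x = 4r² + 1,
which forces x ≤ m - 2.
-/

namespace Nat

variable {m a b z r : ℕ}

theorem dvd_mul_sq_add_mod (h : m ∣ a * z ^ 2 + b) : m ∣ a * (z % m) ^ 2 + b :=
  ((((mod_modEq z m).pow 2).mul_left a).add_right b).dvd_iff dvd_rfl |>.mpr h

theorem dvd_mul_sub_sq_add (hz : z ≤ m) (h : m ∣ a * z ^ 2 + b) :
    m ∣ a * (m - z) ^ 2 + b := by
  rw [← ZMod.natCast_eq_zero_iff] at h ⊢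
  push_cast [cast_sub hz, ZMod.natCast_self] at h ⊢
  linear_combination h

theorem mod_pos_of_dvd_mul_sq_add (hb : ¬ m ∣ b) (h : m ∣ a * z ^ 2 + b) : 0 < z % m := by
  refine pos_of_ne_zero fun hz => hb ?_
  have hmz : m ∣ a * z ^ 2 := ((dvd_of_mod_eq_zero hz).pow two_ne_zero).mul_left a
  exact (Nat.dvd_add_right hmz).mp h

theorem lt_of_isLeast_dvd_mul_sq_add (hb : ¬ m ∣ b)
    (hr : IsLeast {z | 0 < z ∧ m ∣ a * z ^ 2 + b} r) : r < m := by
  have hm : m ≠ 0 := by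
    rintro rfl
    exact hb (by simp [Nat.eq_zero_of_add_eq_zero_left (zero_dvd_iff.mp hr.1.2)])
  have hle : r ≤ r % m :=
    hr.2 ⟨mod_pos_of_dvd_mul_sq_add hb hr.1.2, dvd_mul_sq_add_mod hr.1.2⟩
  exact hle.trans_lt (mod_lt r (pos_of_ne_zero hm))

theorem two_mul_lt_of_isLeast_dvd_mul_sq_add (hodd : Odd m) (hb : ¬ m ∣ b)
    (hr : IsLeast {z | 0 < z ∧ m ∣ a * z ^ 2 + b} r) : 2 * r < m := by
  have hrm := lt_of_isLeast_dvd_mul_sq_add hb hr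
  have hle : r ≤ m - r := hr.2 ⟨by omega, dvd_mul_sub_sq_add hrm.le hr.1.2⟩
  obtain ⟨k, rfl⟩ := hodd
  omega

end Nat

theorem stmt_9 (m r x : ℕ) (hm : 1 < m) (hodd : Odd m)
    (hr0 : 0 < r) (hdvd : m ∣ 4 * r ^ 2 + 1)
    (hleast : ∀ z : ℕ, 0 < z → m ∣ 4 * z ^ 2 + 1 → r ≤ z)
    (hx : 4 * r ^ 2 + 1 = m * x) :
    x ≤ m - 2 := by
  have hr : IsLeast {z | 0 < z ∧ m ∣ 4 * z ^ 2 + 1} r :=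
    ⟨⟨hr0, hdvd⟩, fun z hz => hleast z hz.1 hz.2⟩
  have hm1 : ¬ m ∣ 1 := fun h => hm.ne' (Nat.dvd_one.mp h)
  have h2r : 2 * r + 1 ≤ m := Nat.two_mul_lt_of_isLeast_dvd_mul_sq_add hodd hm1 hr
  have hxm : x < m := by
    refine Nat.lt_of_mul_lt_mul_left (a := m) ?_
    calc m * x = 4 * r ^ 2 + 1 := hx.symm
      _ < (2 * r + 1) ^ 2 := by nlinarith
      _ ≤ m * m := sq (2 * r + 1) ▸ Nat.mul_self_le_mul_self h2r
  have hxodd : Odd x := (Nat.odd_mul.mp (hx ▸ ⟨2 * r ^ 2, by ring⟩ : Odd (m * x))).2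
  obtain ⟨k, rfl⟩ := hodd
  obtain ⟨l, rfl⟩ := hxodd
  omega
end

section
/- Let m > 1 be an odd integer such that both congruences 4z² ≡ -1 (mod m) and 4z² ≡ -1 (mod m²) are solvable, with least positive solutions r(m) and r(m²) respectively. Then r(m) < r(m²). -/
/-!
A root of `4z² + 1` modulo `m²` is also one modulo `m`, so `r(m) ≤ r(m²)`. The least root
modulo `m` satisfies `2 r(m) < m`, since with `z` also `m - z` is a root; hence
`4 r(m)² + 1 < m²`, so `r(m)` cannot be a root modulo `m²`.
-/

namespace Nat

variable {m z : ℕ}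

theorem dvd_four_sq_add_one_iff_zmod :
    m ∣ 4 * z ^ 2 + 1 ↔ 4 * (z : ZMod m) ^ 2 + 1 = 0 := by
  rw [← ZMod.natCast_eq_zero_iff]
  push_cast
  rfl

theorem dvd_four_mod_sq_add_one (h : m ∣ 4 * z ^ 2 + 1) : m ∣ 4 * (z % m) ^ 2 + 1 := by
  rwa [dvd_four_sq_add_one_iff_zmod, ZMod.natCast_mod, ← dvd_four_sq_add_one_iff_zmod]

theorem dvd_four_sub_sq_add_one (hz : z ≤ m) (h : m ∣ 4 * z ^ 2 + 1) :
    m ∣ 4 * (m - z) ^ 2 + 1 := by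
  rwa [dvd_four_sq_add_one_iff_zmod, Nat.cast_sub hz, ZMod.natCast_self, zero_sub, neg_sq,
    ← dvd_four_sq_add_one_iff_zmod]

theorem not_dvd_two_mul_of_dvd_four_sq_add_one (hm : 1 < m) (h : m ∣ 4 * z ^ 2 + 1) :
    ¬ m ∣ 2 * z := by
  intro hz
  have hsq : m ∣ 4 * z ^ 2 := by
    simpa [mul_pow] using (dvd_pow_self m two_ne_zero).trans (pow_dvd_pow_of_dvd hz 2)
  have := Nat.le_of_dvd one_pos ((Nat.dvd_add_right hsq).mp h)
  omega

theorem two_mul_lt_of_least_dvd_four_sq_add_one {r : ℕ} (hm : 1 < m)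
    (hdvd : m ∣ 4 * r ^ 2 + 1) (hleast : ∀ z : ℕ, 0 < z → m ∣ 4 * z ^ 2 + 1 → r ≤ z) :
    2 * r < m := by
  have hndvd := not_dvd_two_mul_of_dvd_four_sq_add_one hm hdvd
  have hmod_pos : 0 < r % m :=
    Nat.pos_of_ne_zero fun h => hndvd ((Nat.dvd_of_mod_eq_zero h).mul_left 2)
  have hrm : r < m :=
    (hleast _ hmod_pos (dvd_four_mod_sq_add_one hdvd)).trans_lt (Nat.mod_lt _ (by omega))
  have hle : r ≤ m - r := hleast _ (by omega) (dvd_four_sub_sq_add_one hrm.le hdvd)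
  have hne : 2 * r ≠ m := fun h => hndvd h.symm.dvd
  omega

end Nat

theorem stmt_10_general (m r r2 : ℕ) (hm : 1 < m)
    (hr0 : 0 < r) (hdvd : m ∣ 4 * r ^ 2 + 1)
    (hleast : ∀ z : ℕ, 0 < z → m ∣ 4 * z ^ 2 + 1 → r ≤ z)
    (hr20 : 0 < r2) (hdvd2 : m ^ 2 ∣ 4 * r2 ^ 2 + 1) :
    r < r2 := by
  have hle : r ≤ r2 := hleast r2 hr20 ((dvd_pow_self m two_ne_zero).trans hdvd2)
  refine hle.lt_of_ne fun heq => ?_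
  subst heq
  have h2r : 2 * r < m := Nat.two_mul_lt_of_least_dvd_four_sq_add_one hm hdvd hleast
  have hsq_le : m ^ 2 ≤ 4 * r ^ 2 + 1 := Nat.le_of_dvd (by positivity) hdvd2
  nlinarith

theorem stmt_10 (m r r2 : ℕ) (hm : 1 < m) (hodd : Odd m)
    (hr0 : 0 < r) (hdvd : m ∣ 4 * r ^ 2 + 1)
    (hleast : ∀ z : ℕ, 0 < z → m ∣ 4 * z ^ 2 + 1 → r ≤ z)
    (hr20 : 0 < r2) (hdvd2 : m ^ 2 ∣ 4 * r2 ^ 2 + 1)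
    (hleast2 : ∀ z : ℕ, 0 < z → m ^ 2 ∣ 4 * z ^ 2 + 1 → r2 ≤ z) :
    r < r2 :=
  stmt_10_general m r r2 hm hr0 hdvd hleast hr20 hdvd2
end
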